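/- arXiv:2112.05120 — 2 statements merged into one kernel-verified Lean document; each statement's English description precedes it below -/
import Mathlib

section
/- Let f^1,…,f^N : ℝ^d → ℝ each be L-smooth and m-strongly convex with 0 < m ≤ L, and let p_1,…,p_N ∈ (0,1) with Σ_{c=1}^N p_c = 1. For any learning rate η ∈ (0, 1/(L+m)] and any vectors θ^1,…,θ^N, β^1,…,β^N ∈ ℝ^d, setting β = Σ_c p_c β^c, θ = Σ_c p_c θ^c, ∇f(β) = Σ_c p_c ∇f^c(β^c) and 𝛁f(𝛉) = Σ_c p_c ∇f^c(θ^c), one has ‖β − θ − η(∇f(β) − 𝛁f(𝛉))‖₂² ≤ (1 − ηm)·‖β − θ‖₂² + 4ηL·Σ_{c=1}^N p_c (‖β^c − β‖₂² + ‖θ^c − θ‖₂²). -/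
open MeasureTheory Real
open scoped RealInnerProductSpace

theorem descent_lemma {E : Type*} [NormedAddCommGroup E] [InnerProductSpace ℝ E] [CompleteSpace E]
    (f : E → ℝ) (grad : E → E) (K : ℝ) (hK : 0 ≤ K)
    (hgrad : ∀ x, HasGradientAt f (grad x) x)
    (hlip : ∀ x y, ‖grad x - grad y‖ ≤ K * ‖x - y‖) (x y : E) :
    f y ≤ f x + ⟪grad x, y - x⟫ + K / 2 * ‖y - x‖ ^ 2 := by
  set δ := y - x with hδ
  have hψ : ∀ t : ℝ, HasDerivAt (fun t : ℝ => f (x + t • δ)) ⟪grad (x + t • δ), δ⟫ t := by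
    intro t
    have h1 : HasDerivAt (fun t : ℝ => x + t • δ) δ t := by
      simpa using ((hasDerivAt_id t).smul_const δ).const_add x
    have h2 := (hgrad (x + t • δ)).hasFDerivAt.comp_hasDerivAt t h1
    simpa [Function.comp_def] using h2
  have hcont : Continuous grad := by
    rcases eq_or_lt_of_le hK with h | h
    · have : ∀ a b : E, grad a = grad b := by
        intro a b
        have := hlip a b
        rw [← h] at this
        simpa [norm_le_zero_iff, sub_eq_zero] using this
      exact (continuous_const (y := grad x)).congr (fun a => (this x a))
    · apply LipschitzWith.continuous (K := ⟨K, hK⟩)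
      intro a b
      simp only [edist_dist, dist_eq_norm]
      have e : ENNReal.ofReal ‖grad a - grad b‖ ≤ ENNReal.ofReal K * ENNReal.ofReal ‖a - b‖ := by
        rw [← ENNReal.ofReal_mul hK]
        exact ENNReal.ofReal_le_ofReal (hlip a b)
      convert e using 2
      exact (ENNReal.ofReal_eq_coe_nnreal hK).symm
  have hcont2 : Continuous fun t : ℝ => ⟪grad (x + t • δ), δ⟫ := by
    exact (Continuous.inner (hcont.comp (by continuity)) continuous_const)
  have hint : f (x + (1:ℝ) • δ) - f (x + (0:ℝ) • δ)
      = ∫ t in (0:ℝ)..1, ⟪grad (x + t • δ), δ⟫ := by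
    exact (intervalIntegral.integral_eq_sub_of_hasDerivAt (fun t _ => hψ t)
      (hcont2.intervalIntegrable 0 1)).symm
  have hbound : ∫ t in (0:ℝ)..1, ⟪grad (x + t • δ), δ⟫
      ≤ ∫ t in (0:ℝ)..1, (⟪grad x, δ⟫ + K * t * ‖δ‖ ^ 2) := by
    apply intervalIntegral.integral_mono_on (by norm_num)
      (hcont2.intervalIntegrable 0 1)
      (((continuous_const.add (by continuity)).intervalIntegrable 0 1))
    intro t ht
    have h1 : ⟪grad (x + t • δ) - grad x, δ⟫ ≤ ‖grad (x + t • δ) - grad x‖ * ‖δ‖ :=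
      real_inner_le_norm _ _
    have h2 : ‖grad (x + t • δ) - grad x‖ ≤ K * (t * ‖δ‖) := by
      have := hlip (x + t • δ) x
      simpa [norm_smul, abs_of_nonneg ht.1] using this
    have h3 : ⟪grad (x + t • δ) - grad x, δ⟫ ≤ K * t * ‖δ‖ ^ 2 := by
      calc ⟪grad (x + t • δ) - grad x, δ⟫ ≤ ‖grad (x + t • δ) - grad x‖ * ‖δ‖ := h1
        _ ≤ K * (t * ‖δ‖) * ‖δ‖ := by
            apply mul_le_mul_of_nonneg_right h2 (norm_nonneg _)
        _ = K * t * ‖δ‖ ^ 2 := by ring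
    rw [inner_sub_left] at h3
    show ⟪grad (x + t • δ), δ⟫ ≤ ⟪grad x, δ⟫ + K * t * ‖δ‖ ^ 2
    linarith
  have hval : ∫ t in (0:ℝ)..1, (⟪grad x, δ⟫ + K * t * ‖δ‖ ^ 2)
      = ⟪grad x, δ⟫ + K / 2 * ‖δ‖ ^ 2 := by
    have hc : Continuous fun t : ℝ => K * t * ‖δ‖ ^ 2 := by continuity
    rw [intervalIntegral.integral_add
      (intervalIntegrable_const (c := ⟪grad x, δ⟫))
      (hc.intervalIntegrable 0 1)]
    simp only [intervalIntegral.integral_const, smul_eq_mul]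
    have : ∫ t in (0:ℝ)..1, K * t * ‖δ‖ ^ 2 = K / 2 * ‖δ‖ ^ 2 := by
      have : (fun t : ℝ => K * t * ‖δ‖ ^ 2) = fun t : ℝ => (K * ‖δ‖ ^ 2) * t := by
        funext t; ring
      rw [this, intervalIntegral.integral_const_mul, integral_id]
      ring
    rw [this]; ring
  have hy : x + (1:ℝ) • δ = y := by simp [hδ]
  have hx : x + (0:ℝ) • δ = x := by simp
  rw [hy, hx] at hint
  linarith [hint ▸ le_trans (le_of_eq hint) (hval ▸ hbound)]
theorem cocoercivity {E : Type*} [NormedAddCommGroup E] [InnerProductSpace ℝ E] [CompleteSpace E]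
    (f : E → ℝ) (grad : E → E) (L m : ℝ) (hm : 0 < m) (hmL : m ≤ L)
    (hgrad : ∀ x, HasGradientAt f (grad x) x)
    (hsmooth : ∀ x y, ‖grad x - grad y‖ ≤ L * ‖x - y‖)
    (hconv : ∀ x y, f x ≥ f y + ⟪grad y, x - y⟫ + m / 2 * ‖x - y‖ ^ 2) (x y : E) :
    m * L * ‖x - y‖ ^ 2 + ‖grad x - grad y‖ ^ 2 ≤ (m + L) * ⟪grad x - grad y, x - y⟫ := by
  set h : E → ℝ := fun z => f z - m / 2 * ‖z‖ ^ 2 with hh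
  set gh : E → E := fun z => grad z - m • z with hgh
  have normid : ∀ w z : E, ‖w‖ ^ 2 = ‖z‖ ^ 2 + 2 * ⟪z, w - z⟫ + ‖w - z‖ ^ 2 := by
    intro w z
    have := norm_add_sq_real z (w - z)
    simpa using this
  -- convexity of h
  have hconv' : ∀ w z : E, h z + ⟪gh z, w - z⟫ ≤ h w := by
    intro w z
    have h1 := hconv w z
    have h2 := normid w z
    simp only [hh, hgh, inner_sub_left, real_inner_smul_left]
    nlinarith [h1, h2]
  -- upper bound for h
  have hupper : ∀ w z : E, h w ≤ h z + ⟪gh z, w - z⟫ + (L - m) / 2 * ‖w - z‖ ^ 2 := by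
    intro w z
    have h1 := descent_lemma f grad L (by linarith) hgrad hsmooth z w
    have h2 := normid w z
    simp only [hh, hgh, inner_sub_left, real_inner_smul_left]
    nlinarith [h1, h2]
  -- one-sided interpolation
  have side : ∀ a b : E, ∀ t : ℝ, 0 ≤ t →
      (t - (L - m) / 2 * t ^ 2) * ‖gh b - gh a‖ ^ 2 ≤ h b - h a - ⟪gh a, b - a⟫ := by
    intro a b t ht
    set e : E := gh b - gh a with he
    set z : E := b - t • e with hz
    have h1 : h a + ⟪gh a, z - a⟫ ≤ h z := hconv' z a
    have h2 : h z ≤ h b + ⟪gh b, z - b⟫ + (L - m) / 2 * ‖z - b‖ ^ 2 := hupper z b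
    have hzb : z - b = -(t • e) := by simp [hz]
    have e1 : ⟪gh b, z - b⟫ = -(t * ⟪gh b, e⟫) := by
      rw [hzb]; simp [real_inner_smul_right]
    have e2 : ⟪gh a, z - a⟫ = ⟪gh a, b - a⟫ - t * ⟪gh a, e⟫ := by
      have : z - a = (b - a) - t • e := by rw [hz]; abel
      rw [this, inner_sub_right, real_inner_smul_right]
    have e3 : ‖z - b‖ ^ 2 = t ^ 2 * ‖e‖ ^ 2 := by
      rw [hzb, norm_neg, norm_smul]
      rw [Real.norm_eq_abs, abs_of_nonneg ht]
      ring
    have e4 : ⟪gh b, e⟫ - ⟪gh a, e⟫ = ‖e‖ ^ 2 := by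
      rw [← inner_sub_left, ← he, real_inner_self_eq_norm_sq]
    have e5 : t * (⟪gh b, e⟫ - ⟪gh a, e⟫) = t * ‖e‖ ^ 2 := by rw [e4]
    rw [e1] at h2
    rw [e2] at h1
    rw [e3] at h2
    have key : ∀ Ha Hb Hz I A B q : ℝ, Ha + (I - t * A) ≤ Hz →
        Hz ≤ Hb + -(t * B) + (L - m) / 2 * (t ^ 2 * q) → t * (B - A) = t * q →
        (t - (L - m) / 2 * t ^ 2) * q ≤ Hb - Ha - I := by
      intro Ha Hb Hz I A B q k1 k2 k3
      nlinarith [k1, k2, k3]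
    exact key (h a) (h b) (h z) ⟪gh a, b - a⟫ ⟪gh a, e⟫ ⟪gh b, e⟫ (‖e‖ ^ 2) h1 h2 e5
  have both : ∀ t : ℝ, 0 ≤ t →
      (2 * t - (L - m) * t ^ 2) * ‖gh x - gh y‖ ^ 2 ≤ ⟪gh x - gh y, x - y⟫ := by
    intro t ht
    have s1 := side x y t ht
    have s2 := side y x t ht
    have e1 : ‖gh y - gh x‖ = ‖gh x - gh y‖ := norm_sub_rev _ _
    rw [e1] at s1
    have e2 : ⟪gh x - gh y, x - y⟫ = (h y - h x - ⟪gh x, y - x⟫) + (h x - h y - ⟪gh y, x - y⟫) := by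
      rw [inner_sub_left]
      have : (y : E) - x = -(x - y) := by abel
      rw [this, inner_neg_right]
      ring
    rw [e2]
    nlinarith [s1, s2]
  -- Claim 4
  have claim4 : ‖gh x - gh y‖ ^ 2 ≤ (L - m) * ⟪gh x - gh y, x - y⟫ := by
    rcases eq_or_lt_of_le hmL with hEq | hLt
    · -- L = m : show gh x - gh y = 0
      have hz : ‖gh x - gh y‖ ^ 2 = 0 := by
        by_contra hne
        have hpos : 0 < ‖gh x - gh y‖ ^ 2 := lt_of_le_of_ne (by positivity) (Ne.symm hne)
        have h0 : (0:ℝ) ≤ ⟪gh x - gh y, x - y⟫ := by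
          have := both 0 le_rfl; simpa using this
        set t : ℝ := (⟪gh x - gh y, x - y⟫ + 1) / (2 * ‖gh x - gh y‖ ^ 2) with htdef
        have htpos : 0 ≤ t := div_nonneg (by linarith) (by positivity)
        have hb := both t htpos
        rw [← hEq] at hb
        simp only [sub_self, zero_mul, sub_zero] at hb
        have hval : 2 * t * ‖gh x - gh y‖ ^ 2 = ⟪gh x - gh y, x - y⟫ + 1 := by
          rw [htdef]
          have hn : (2 * ‖gh x - gh y‖ ^ 2) ≠ 0 := (by linarith : (0:ℝ) < 2 * ‖gh x - gh y‖ ^ 2).ne'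
          calc 2 * ((⟪gh x - gh y, x - y⟫ + 1) / (2 * ‖gh x - gh y‖ ^ 2)) * ‖gh x - gh y‖ ^ 2
              = (⟪gh x - gh y, x - y⟫ + 1) / (2 * ‖gh x - gh y‖ ^ 2) * (2 * ‖gh x - gh y‖ ^ 2) := by ring
            _ = _ := div_mul_cancel₀ _ hn
        nlinarith [hb, hval]
      rw [hz, ← hEq]
      simp
    · have hLm : 0 < L - m := by linarith
      have := both (1 / (L - m)) (le_of_lt (by positivity))
      have e : (2 * (1 / (L - m)) - (L - m) * (1 / (L - m)) ^ 2) = 1 / (L - m) := by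
        field_simp; ring
      rw [e] at this
      calc ‖gh x - gh y‖ ^ 2 = (L - m) * ((1 / (L - m)) * ‖gh x - gh y‖ ^ 2) := by
            field_simp
        _ ≤ (L - m) * ⟪gh x - gh y, x - y⟫ := by
            apply mul_le_mul_of_nonneg_left _ (le_of_lt hLm)
            exact this
  -- expand
  have egh : gh x - gh y = (grad x - grad y) - m • (x - y) := by
    simp only [hgh, smul_sub]; abel
  rw [egh] at claim4
  have en : ‖(grad x - grad y) - m • (x - y)‖ ^ 2
      = ‖grad x - grad y‖ ^ 2 - 2 * (m * ⟪grad x - grad y, x - y⟫) + m ^ 2 * ‖x - y‖ ^ 2 := by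
    rw [norm_sub_sq_real, real_inner_smul_right, norm_smul, Real.norm_eq_abs,
      abs_of_nonneg (le_of_lt hm)]
    ring
  have ei : ⟪(grad x - grad y) - m • (x - y), x - y⟫
      = ⟪grad x - grad y, x - y⟫ - m * ‖x - y‖ ^ 2 := by
    rw [inner_sub_left, real_inner_smul_left, real_inner_self_eq_norm_sq]
  rw [en, ei] at claim4
  nlinarith [claim4]
theorem jensen_norm_sq {E : Type*} [NormedAddCommGroup E] [InnerProductSpace ℝ E]
    {N : ℕ} (p : Fin N → ℝ) (hp : ∀ c, 0 ≤ p c) (hsum : ∑ c, p c = 1)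
    (v : Fin N → E) : ‖∑ c, p c • v c‖ ^ 2 ≤ ∑ c, p c * ‖v c‖ ^ 2 := by
  have h1 : ‖∑ c, p c • v c‖ ≤ ∑ c, p c * ‖v c‖ := by
    refine le_trans (norm_sum_le _ _) (le_of_eq ?_)
    refine Finset.sum_congr rfl fun c _ => ?_
    rw [norm_smul, Real.norm_eq_abs, abs_of_nonneg (hp c)]
  have h2 : (∑ c, p c * ‖v c‖) ^ 2 ≤ ∑ c, p c * ‖v c‖ ^ 2 := by
    have hcs := Finset.sum_mul_sq_le_sq_mul_sq Finset.univ
      (fun c => Real.sqrt (p c)) (fun c => Real.sqrt (p c) * ‖v c‖)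
    have e1 : ∀ c : Fin N, Real.sqrt (p c) * (Real.sqrt (p c) * ‖v c‖) = p c * ‖v c‖ := by
      intro c; rw [← mul_assoc, Real.mul_self_sqrt (hp c)]
    have e2 : ∀ c : Fin N, Real.sqrt (p c) ^ 2 = p c := fun c => Real.sq_sqrt (hp c)
    have e3 : ∀ c : Fin N, (Real.sqrt (p c) * ‖v c‖) ^ 2 = p c * ‖v c‖ ^ 2 := by
      intro c; rw [mul_pow, e2]
    simp only [e1, e2, e3] at hcs
    rw [hsum, one_mul] at hcs
    exact hcs
  calc ‖∑ c, p c • v c‖ ^ 2 ≤ (∑ c, p c * ‖v c‖) ^ 2 := by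
        apply sq_le_sq' _ h1
        have : 0 ≤ ∑ c, p c * ‖v c‖ := Finset.sum_nonneg fun c _ => mul_nonneg (hp c) (norm_nonneg _)
        nlinarith [norm_nonneg (∑ c, p c • v c)]
    _ ≤ ∑ c, p c * ‖v c‖ ^ 2 := h2
set_option maxHeartbeats 1600000 in
/-- **Dominated contraction property** (Lemma 4.1 / Lemma C.1 of the paper).
For `L`-smooth, `m`-strongly convex local functions `f^c` with weights `p_c`,
any learning rate `η ∈ (0, 1/(L+m)]` and any local vectors `θ^c, β^c`,
`‖β − θ − η(∇f(β) − 𝛁f(𝛉))‖² ≤ (1 − ηm)‖β − θ‖² + 4ηL Σ_c p_c (‖β^c − β‖² + ‖θ^c − θ‖²)`. -/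
theorem dominated_contraction
    (d N : ℕ) (hN : 0 < N)
    (L m : ℝ) (hm : 0 < m) (hmL : m ≤ L)
    (p : Fin N → ℝ) (hp : ∀ c, p c ∈ Set.Ioo (0:ℝ) 1) (hpsum : ∑ c, p c = 1)
    (f : Fin N → EuclideanSpace ℝ (Fin d) → ℝ)
    (gradf : Fin N → EuclideanSpace ℝ (Fin d) → EuclideanSpace ℝ (Fin d))
    (hgrad : ∀ c x, HasGradientAt (f c) (gradf c x) x)
    (hsmooth : ∀ c x y, ‖gradf c x - gradf c y‖ ≤ L * ‖x - y‖)
    (hconv : ∀ c x y, f c x ≥ f c y + ⟪gradf c y, x - y⟫ + m / 2 * ‖x - y‖ ^ 2)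
    (η : ℝ) (hη : η ∈ Set.Ioc (0:ℝ) (1 / (L + m)))
    (θv βv : Fin N → EuclideanSpace ℝ (Fin d)) :
    ‖(∑ c, p c • βv c) - (∑ c, p c • θv c) -
        η • ((∑ c, p c • gradf c (βv c)) - (∑ c, p c • gradf c (θv c)))‖ ^ 2 ≤
      (1 - η * m) * ‖(∑ c, p c • βv c) - (∑ c, p c • θv c)‖ ^ 2 +
        4 * η * L * ∑ c, p c *
          (‖βv c - ∑ c', p c' • βv c'‖ ^ 2 + ‖θv c - ∑ c', p c' • θv c'‖ ^ 2) := by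
  obtain ⟨hη0, hη1⟩ := hη
  have hL : 0 < L := lt_of_lt_of_le hm hmL
  set a : ℝ := m + L with ha0
  have hapos : 0 < a := by rw [ha0]; linarith
  have hηa : η * a ≤ 1 := by
    have h1 : η * (L + m) ≤ 1 := (le_div_iff₀ (by linarith)).mp hη1
    rw [ha0]; linarith [h1]
  set B : EuclideanSpace ℝ (Fin d) := ∑ c, p c • βv c with hB0
  set Θ : EuclideanSpace ℝ (Fin d) := ∑ c, p c • θv c with hΘ0
  set G : EuclideanSpace ℝ (Fin d) :=
    (∑ c, p c • gradf c (βv c)) - (∑ c, p c • gradf c (θv c)) with hG0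
  set u : EuclideanSpace ℝ (Fin d) := B - Θ with hu0
  set g : Fin N → EuclideanSpace ℝ (Fin d) :=
    fun c => gradf c (βv c) - gradf c (θv c) with hg0
  set w : Fin N → EuclideanSpace ℝ (Fin d) :=
    fun c => (βv c - B) - (θv c - Θ) with hw0
  set Sδ : ℝ := ∑ c, p c * ‖βv c - θv c‖ ^ 2 with hSδ0
  set Sg : ℝ := ∑ c, p c * ‖g c‖ ^ 2 with hSg0
  set Sw : ℝ := ∑ c, p c * ‖w c‖ ^ 2 with hSw0
  set S : ℝ := ∑ c, p c * (‖βv c - B‖ ^ 2 + ‖θv c - Θ‖ ^ 2) with hS0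
  clear_value a B Θ G u g w Sδ Sg Sw S
  have hG : G = ∑ c, p c • g c := by
    simp only [hG0, hg0, smul_sub, Finset.sum_sub_distrib]
  have hu : u = ∑ c, p c • (βv c - θv c) := by
    simp only [hu0, hB0, hΘ0, smul_sub, Finset.sum_sub_distrib]
  have pull : ∀ (k : ℝ) (x : Fin N → ℝ), ∑ c, p c * (k * x c) = k * ∑ c, p c * x c := by
    intro k x
    rw [Finset.mul_sum]
    exact Finset.sum_congr rfl fun c _ => by ring
  -- per-coordinate cleared co-coercivity bound
  have key : ∀ P X Y WG nδ ng nw : ℝ, P = X - Y →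
      m * L * nδ + ng ≤ a * X → Y ≤ WG →
      a * WG ≤ a ^ 2 / 2 * nw + 1 / 2 * ng →
      m * L * nδ + 1 / 2 * ng - a ^ 2 / 2 * nw ≤ a * P := by
    intro P X Y WG nδ ng nw hP k1 k2 k3
    have k4 : a * Y ≤ a * WG := mul_le_mul_of_nonneg_left k2 hapos.le
    have k5 : a * P = a * X - a * Y := by rw [hP]; ring
    linarith
  have amg : ∀ W V : ℝ, 0 ≤ W → 0 ≤ V → a * (W * V) ≤ a ^ 2 / 2 * W ^ 2 + 1 / 2 * V ^ 2 := by
    intro W V _ _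
    nlinarith [sq_nonneg (a * W - V)]
  have perc : ∀ c, m * L * ‖βv c - θv c‖ ^ 2 + 1 / 2 * ‖g c‖ ^ 2 - a ^ 2 / 2 * ‖w c‖ ^ 2
      ≤ a * ⟪u, g c⟫ := by
    intro c
    have hco := cocoercivity (f c) (gradf c) L m hm hmL (hgrad c) (hsmooth c) (hconv c)
      (βv c) (θv c)
    rw [← ha0] at hco
    have hueq : u = (βv c - θv c) - w c := by
      simp only [hu0, hw0]
      abel
    have hsplit : ⟪u, g c⟫ = ⟪g c, βv c - θv c⟫ - ⟪w c, g c⟫ := by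
      rw [hueq, inner_sub_left, real_inner_comm (βv c - θv c) (g c)]
    exact key _ _ _ _ _ _ _ hsplit (by simpa [hg0] using hco) (real_inner_le_norm _ _)
      (amg _ _ (norm_nonneg _) (norm_nonneg _))
  have eG : ⟪u, G⟫ = ∑ c, p c * ⟪u, g c⟫ := by
    rw [hG, inner_sum]
    exact Finset.sum_congr rfl fun c _ => real_inner_smul_right _ _ _
  have Fsum : ∑ c, p c * (m * L * ‖βv c - θv c‖ ^ 2 + 1 / 2 * ‖g c‖ ^ 2
      - a ^ 2 / 2 * ‖w c‖ ^ 2) ≤ ∑ c, p c * (a * ⟪u, g c⟫) :=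
    Finset.sum_le_sum fun c _ => mul_le_mul_of_nonneg_left (perc c) (hp c).1.le
  have eL : ∑ c, p c * (m * L * ‖βv c - θv c‖ ^ 2 + 1 / 2 * ‖g c‖ ^ 2
      - a ^ 2 / 2 * ‖w c‖ ^ 2)
      = m * L * Sδ + 1 / 2 * Sg - a ^ 2 / 2 * Sw := by
    simp only [mul_add, mul_sub]
    rw [Finset.sum_sub_distrib, Finset.sum_add_distrib,
      pull (m * L) (fun c => ‖βv c - θv c‖ ^ 2), pull (1 / 2) (fun c => ‖g c‖ ^ 2),
      pull (a ^ 2 / 2) (fun c => ‖w c‖ ^ 2), hSδ0, hSg0, hSw0]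
  have eR : ∑ c, p c * (a * ⟪u, g c⟫) = a * ⟪u, G⟫ := by
    rw [pull a (fun c => ⟪u, g c⟫), ← eG]
  have hk1 : m * L * Sδ + 1 / 2 * Sg - a ^ 2 / 2 * Sw ≤ a * ⟪u, G⟫ := by
    rw [← eL, ← eR]; exact Fsum
  have hk2 : ‖G‖ ^ 2 ≤ Sg := by
    rw [hG, hSg0]
    exact jensen_norm_sq p (fun c => (hp c).1.le) hpsum g
  have hk3 : ‖u‖ ^ 2 ≤ Sδ := by
    rw [hu, hSδ0]
    exact jensen_norm_sq p (fun c => (hp c).1.le) hpsum (fun c => βv c - θv c)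
  have sq2 : ∀ W n1 n2 : ℝ, 0 ≤ W → 0 ≤ n1 → 0 ≤ n2 → W ≤ n1 + n2 →
      W ^ 2 ≤ 2 * (n1 ^ 2 + n2 ^ 2) := by
    intro W n1 n2 h1 h2 h3 h4
    nlinarith [sq_nonneg (n1 - n2)]
  have hk4 : Sw ≤ 2 * S := by
    rw [hSw0, hS0, ← pull 2 (fun c => ‖βv c - B‖ ^ 2 + ‖θv c - Θ‖ ^ 2)]
    refine Finset.sum_le_sum fun c _ => mul_le_mul_of_nonneg_left ?_ (hp c).1.le
    exact sq2 _ _ _ (norm_nonneg _) (norm_nonneg _) (norm_nonneg _)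
      (by rw [hw0]; exact norm_sub_le _ _)
  have hSgnn : 0 ≤ Sg := by
    rw [hSg0]
    exact Finset.sum_nonneg fun c _ => mul_nonneg (hp c).1.le (sq_nonneg _)
  have hSnn : 0 ≤ S := by
    rw [hS0]
    exact Finset.sum_nonneg fun c _ => mul_nonneg (hp c).1.le
      (add_nonneg (sq_nonneg _) (sq_nonneg _))
  have hSwnn : 0 ≤ Sw := by
    rw [hSw0]
    exact Finset.sum_nonneg fun c _ => mul_nonneg (hp c).1.le (sq_nonneg _)
  have final : ∀ nu nG P : ℝ, m * L * Sδ + 1 / 2 * Sg - a ^ 2 / 2 * Sw ≤ a * P →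
      nG ≤ Sg → nu ≤ Sδ → 0 ≤ nu → 0 ≤ nG →
      nu - 2 * η * P + η ^ 2 * nG ≤ (1 - η * m) * nu + 4 * η * L * S := by
    intro nu nG P k1 k2 k3 knu knG
    have ha2L : a ≤ 2 * L := by rw [ha0]; linarith
    have c1 : 2 * η * (m * L * Sδ + 1 / 2 * Sg - a ^ 2 / 2 * Sw) ≤ 2 * η * (a * P) :=
      mul_le_mul_of_nonneg_left k1 (by linarith)
    have hb1 : η ^ 2 * a * nG ≤ η * Sg := by
      have h1 : η ^ 2 * a * nG ≤ η ^ 2 * a * Sg :=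
        mul_le_mul_of_nonneg_left k2 (mul_nonneg (sq_nonneg η) hapos.le)
      have h2 : η ^ 2 * a * Sg = (η * a) * (η * Sg) := by ring
      have h3 : (η * a) * (η * Sg) ≤ 1 * (η * Sg) :=
        mul_le_mul_of_nonneg_right hηa (mul_nonneg hη0.le hSgnn)
      linarith
    have hb2a : 2 * η * m * L * nu ≤ 2 * η * m * L * Sδ :=
      mul_le_mul_of_nonneg_left k3
        (mul_nonneg (mul_nonneg (mul_nonneg (by norm_num) hη0.le) hm.le) hL.le)
    have hb2b : (η * m * nu) * a ≤ (η * m * nu) * (2 * L) :=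
      mul_le_mul_of_nonneg_left ha2L
        (mul_nonneg (mul_nonneg hη0.le hm.le) knu)
    have hb3a : η * a ^ 2 * Sw ≤ η * a ^ 2 * (2 * S) :=
      mul_le_mul_of_nonneg_left hk4 (mul_nonneg hη0.le (sq_nonneg a))
    have hb3b : (2 * η * S) * (a * a) ≤ (2 * η * S) * (2 * L * a) :=
      mul_le_mul_of_nonneg_left (mul_le_mul_of_nonneg_right ha2L hapos.le)
        (mul_nonneg (mul_nonneg (by norm_num) hη0.le) hSnn)
    have main' : a * (nu - 2 * η * P + η ^ 2 * nG)
        ≤ a * ((1 - η * m) * nu + 4 * η * L * S) := by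
      nlinarith [c1, hb1, hb2a, hb2b, hb3a, hb3b]
    exact (mul_le_mul_iff_right₀ hapos).mp main'
  have F1 : ‖u - η • G‖ ^ 2 = ‖u‖ ^ 2 - 2 * η * ⟪u, G⟫ + η ^ 2 * ‖G‖ ^ 2 := by
    rw [norm_sub_sq_real, real_inner_smul_right, norm_smul, Real.norm_eq_abs,
      abs_of_nonneg hη0.le]
    ring
  calc ‖u - η • G‖ ^ 2 = ‖u‖ ^ 2 - 2 * η * ⟪u, G⟫ + η ^ 2 * ‖G‖ ^ 2 := F1
    _ ≤ (1 - η * m) * ‖u‖ ^ 2 + 4 * η * L * S :=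
        final _ _ _ hk1 hk2 hk3 (sq_nonneg _) (sq_nonneg _)
end

section
/- Let f : ℝ^d → ℝ be m-strongly convex with global minimizer θ*, let τ > 0, and let π be the probability measure on ℝ^d with density proportional to exp(−f(θ)/τ). Let μ₀ be the Dirac measure at a point θ₀ ∈ ℝ^d. Then W₂(μ₀, π) ≤ √2·(‖θ₀ − θ*‖₂ + √(dτ/m)). -/
open MeasureTheory Real Filter Set
open scoped ENNReal NNReal RealInnerProductSpace Topology

lemma gauss_int (d : ℕ) {c : ℝ} (hc : 0 < c) :
    Integrable (fun v : EuclideanSpace ℝ (Fin d) => Real.exp (-c * ‖v‖ ^ 2)) := by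
  have h := (GaussianFourier.integrable_cexp_neg_mul_sq_norm_add
    (V := EuclideanSpace ℝ (Fin d)) (b := (c : ℂ)) (by simpa using hc) 0 0).norm
  refine h.congr ?_
  filter_upwards with v
  rw [Complex.norm_exp]
  norm_num
  left
  norm_cast

lemma poly_gauss_int (d : ℕ) {c : ℝ} (hc : 0 < c) :
    Integrable (fun v : EuclideanSpace ℝ (Fin d) => ‖v‖ ^ 2 * Real.exp (-c * ‖v‖ ^ 2)) := by
  refine ((gauss_int d (half_pos hc)).const_mul (2 / c)).mono'
    (Continuous.aestronglyMeasurable (by continuity)) ?_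
  filter_upwards with v
  rw [Real.norm_eq_abs, abs_of_nonneg (by positivity)]
  have h2 : c / 2 * ‖v‖ ^ 2 ≤ Real.exp (c / 2 * ‖v‖ ^ 2) :=
    le_trans (by linarith [Real.add_one_le_exp (c / 2 * ‖v‖ ^ 2)]) le_rfl
  have h1 : ‖v‖ ^ 2 ≤ 2 / c * Real.exp (c / 2 * ‖v‖ ^ 2) := by
    rw [div_mul_eq_mul_div, le_div_iff₀ hc]
    nlinarith
  calc ‖v‖ ^ 2 * Real.exp (-c * ‖v‖ ^ 2)
      ≤ 2 / c * Real.exp (c / 2 * ‖v‖ ^ 2) * Real.exp (-c * ‖v‖ ^ 2) :=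
        mul_le_mul_of_nonneg_right h1 (Real.exp_pos _).le
    _ = 2 / c * Real.exp (-(c / 2) * ‖v‖ ^ 2) := by
        rw [mul_assoc, ← Real.exp_add]; ring_nf


section Main
variable {d : ℕ} {m τ : ℝ} {f : EuclideanSpace ℝ (Fin d) → ℝ}
  {gradf : EuclideanSpace ℝ (Fin d) → EuclideanSpace ℝ (Fin d)}
  {θstar : EuclideanSpace ℝ (Fin d)}

set_option maxHeartbeats 1000000 in
lemma key_moment (hm : 0 < m) (hτ : 0 < τ)
    (hgrad : ∀ x, HasGradientAt f (gradf x) x)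
    (hconv : ∀ x y, f x ≥ f y + ⟪gradf y, x - y⟫ + m / 2 * ‖x - y‖ ^ 2)
    (hθstar : ∀ x, f θstar ≤ f x) :
    (∫ θ, ‖θ‖ ^ 2 * Real.exp (-(f (θstar + θ) - f θstar) / τ)) ≤
      d * τ / m * ∫ θ, Real.exp (-(f (θstar + θ) - f θstar) / τ) := by
  have hdiff : Differentiable ℝ f := fun x => ((hgrad x).hasFDerivAt).differentiableAt
  have contf : Continuous f := hdiff.continuous
  set c : ℝ := m / (2 * τ) with hc_def
  have hc : 0 < c := by positivity
  -- gradient at the minimizer vanishes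
  have hg0 : gradf θstar = 0 := by
    have hloc : IsLocalMin f θstar := Filter.Eventually.of_forall hθstar
    have hF := hloc.hasFDerivAt_eq_zero (hgrad θstar).hasFDerivAt
    simpa using (LinearIsometryEquiv.map_eq_zero_iff
      (InnerProductSpace.toDual ℝ (EuclideanSpace ℝ (Fin d)))).mp hF
  set φ : EuclideanSpace ℝ (Fin d) → ℝ := fun θ => (f (θstar + θ) - f θstar) / τ with hφ_def
  set v : EuclideanSpace ℝ (Fin d) → ℝ :=
    fun θ => Real.exp (-(f (θstar + θ) - f θstar) / τ) with hv_def
  have hv_eq : ∀ θ, v θ = Real.exp (-φ θ) := by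
    intro θ
    show Real.exp (-(f (θstar + θ) - f θstar) / τ) = Real.exp (-((f (θstar + θ) - f θstar) / τ))
    rw [neg_div]
  have hv_pos : ∀ θ, 0 < v θ := fun θ => Real.exp_pos _
  -- quadratic lower bound
  have hφ_lb : ∀ θ, c * ‖θ‖ ^ 2 ≤ φ θ := by
    intro θ
    have h1 := hconv (θstar + θ) θstar
    rw [hg0] at h1
    simp only [inner_zero_left, add_sub_cancel_left, add_zero] at h1
    rw [hφ_def, le_div_iff₀ hτ, hc_def]
    have : m / (2 * τ) * ‖θ‖ ^ 2 * τ = m / 2 * ‖θ‖ ^ 2 := by field_simp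
    rw [this]; linarith
  -- strong convexity between points
  have hφ_key : ∀ s ∈ Set.Ioo (0:ℝ) 1, ∀ θ,
      φ (s • θ) ≤ s * φ θ - c * s * (1 - s) * ‖θ‖ ^ 2 := by
    intro s hs θ
    obtain ⟨hs0, hs1⟩ := hs
    set z := θstar + s • θ with hz
    have h1 := hconv (θstar + θ) z
    have h2 := hconv θstar z
    have e1 : θstar + θ - z = (1 - s) • θ := by
      rw [hz]; rw [sub_smul, one_smul]; abel
    have e2 : θstar - z = -(s • θ) := by rw [hz]; abel
    rw [e1] at h1
    rw [e2] at h2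
    rw [real_inner_smul_right] at h1
    rw [inner_neg_right, real_inner_smul_right] at h2
    rw [norm_smul, Real.norm_eq_abs, abs_of_nonneg (by linarith)] at h1
    rw [norm_neg, norm_smul, Real.norm_eq_abs, abs_of_nonneg hs0.le] at h2
    have hn1 : ((1 - s) * ‖θ‖) ^ 2 = (1 - s) ^ 2 * ‖θ‖ ^ 2 := by ring
    have hn2 : (s * ‖θ‖) ^ 2 = s ^ 2 * ‖θ‖ ^ 2 := by ring
    rw [hn1] at h1; rw [hn2] at h2
    have key : f z - f θstar ≤ s * (f (θstar + θ) - f θstar)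
        - m / 2 * s * (1 - s) * ‖θ‖ ^ 2 := by nlinarith
    show (f (θstar + s • θ) - f θstar) / τ ≤
      s * ((f (θstar + θ) - f θstar) / τ) - c * s * (1 - s) * ‖θ‖ ^ 2
    have hzφ : (f (θstar + s • θ) - f θstar) = f z - f θstar := by rw [hz]
    rw [hzφ, div_le_iff₀ hτ]
    have hcτ : c * τ = m / 2 := by rw [hc_def]; field_simp
    have expand : (s * ((f (θstar + θ) - f θstar) / τ) - c * s * (1 - s) * ‖θ‖ ^ 2) * τ
        = s * (f (θstar + θ) - f θstar) - (c * τ) * s * (1 - s) * ‖θ‖ ^ 2 := by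
      field_simp
    rw [expand, hcτ]
    linarith
  -- integrability
  have cont_v : Continuous v := by
    rw [hv_def]; exact (((contf.comp (continuous_const.add continuous_id)).sub
      continuous_const).neg.div_const τ).rexp
  have int_v : Integrable v := by
    refine (gauss_int d hc).mono' cont_v.aestronglyMeasurable ?_
    filter_upwards with θ
    rw [Real.norm_eq_abs, abs_of_pos (hv_pos θ), hv_eq]
    exact Real.exp_le_exp.mpr (by linarith [hφ_lb θ])
  have int_nv : Integrable (fun θ : EuclideanSpace ℝ (Fin d) => ‖θ‖ ^ 2 * v θ) := by
    refine (poly_gauss_int d hc).mono'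
      ((continuous_norm.pow 2).mul cont_v).aestronglyMeasurable ?_
    filter_upwards with θ
    rw [Real.norm_eq_abs, abs_of_nonneg (by positivity), hv_eq]
    exact mul_le_mul_of_nonneg_left
      (Real.exp_le_exp.mpr (by linarith [hφ_lb θ])) (by positivity)
  set Z : ℝ := ∫ θ, v θ with hZ_def
  set M : ℝ := ∫ θ, ‖θ‖ ^ 2 * v θ with hM_def
  have hM_nonneg : 0 ≤ M :=
    integral_nonneg (fun θ => by positivity)
  -- the scaling inequality
  have step : ∀ s ∈ Set.Ioo (0:ℝ) 1,
      Z + c * (1 - s ^ 2) * M ≤ ((s ^ d)⁻¹) * Z := by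
    intro s hs
    obtain ⟨hs0, hs1⟩ := hs
    have int_vs : Integrable (fun θ : EuclideanSpace ℝ (Fin d) => v (s • θ)) := by
      refine (gauss_int d (show (0:ℝ) < c * s ^ 2 by positivity)).mono'
        (cont_v.comp (continuous_id.const_smul s)).aestronglyMeasurable ?_
      filter_upwards with θ
      rw [Real.norm_eq_abs, abs_of_pos (hv_pos _), hv_eq]
      refine Real.exp_le_exp.mpr ?_
      have := hφ_lb (s • θ)
      rw [norm_smul, Real.norm_eq_abs, abs_of_pos hs0, mul_pow] at this
      nlinarith
    have scale : (∫ θ, v (s • θ)) = ((s ^ d)⁻¹) * Z := by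
      rw [hZ_def]
      have := Measure.integral_comp_smul (μ := (volume : Measure (EuclideanSpace ℝ (Fin d)))) v s
      rw [this, finrank_euclideanSpace_fin, smul_eq_mul, abs_of_pos (by positivity)]
    have ptwise : ∀ θ, v θ + c * (1 - s ^ 2) * (‖θ‖ ^ 2 * v θ) ≤ v (s • θ) := by
      intro θ
      have e1 : Real.exp (-(s * φ θ) + c * s * (1 - s) * ‖θ‖ ^ 2) ≤ v (s • θ) := by
        rw [hv_eq]
        exact Real.exp_le_exp.mpr (by linarith [hφ_key s ⟨hs0, hs1⟩ θ])
      have e2 : Real.exp (-(s * φ θ) + c * s * (1 - s) * ‖θ‖ ^ 2)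
          = v θ * Real.exp ((1 - s) * φ θ + c * s * (1 - s) * ‖θ‖ ^ 2) := by
        rw [hv_eq, ← Real.exp_add]; ring_nf
      have e3 : 1 + ((1 - s) * φ θ + c * s * (1 - s) * ‖θ‖ ^ 2)
          ≤ Real.exp ((1 - s) * φ θ + c * s * (1 - s) * ‖θ‖ ^ 2) := by
        linarith [Real.add_one_le_exp ((1 - s) * φ θ + c * s * (1 - s) * ‖θ‖ ^ 2)]
      have e4 : v θ * (1 + ((1 - s) * φ θ + c * s * (1 - s) * ‖θ‖ ^ 2))
          ≤ v θ * Real.exp ((1 - s) * φ θ + c * s * (1 - s) * ‖θ‖ ^ 2) :=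
        mul_le_mul_of_nonneg_left e3 (hv_pos θ).le
      have e5 : v θ + c * (1 - s ^ 2) * (‖θ‖ ^ 2 * v θ)
          ≤ v θ * (1 + ((1 - s) * φ θ + c * s * (1 - s) * ‖θ‖ ^ 2)) := by
        have h6 := mul_le_mul_of_nonneg_left (hφ_lb θ)
          (mul_nonneg (hv_pos θ).le (by linarith : (0:ℝ) ≤ 1 - s))
        nlinarith [hv_pos θ, sq_nonneg ‖θ‖]
      linarith [e4.trans_eq e2.symm |>.trans e1]
    calc Z + c * (1 - s ^ 2) * M
        = ∫ θ, (v θ + c * (1 - s ^ 2) * (‖θ‖ ^ 2 * v θ)) := by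
          rw [integral_add int_v (int_nv.const_mul _), integral_const_mul, hZ_def, hM_def]
      _ ≤ ∫ θ, v (s • θ) := integral_mono (int_v.add (int_nv.const_mul _)) int_vs ptwise
      _ = ((s ^ d)⁻¹) * Z := scale
  clear_value Z M
  -- per-s bound on M
  have bound_s : ∀ s ∈ Set.Ioo (0:ℝ) 1,
      M ≤ ((s ^ d)⁻¹ - 1) / (c * (1 - s ^ 2)) * Z := by
    intro s hs
    obtain ⟨hs0, hs1⟩ := hs
    have hs2 : s ^ 2 < 1 := by nlinarith
    have hpos : 0 < c * (1 - s ^ 2) := mul_pos hc (by linarith)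
    have := step s ⟨hs0, hs1⟩
    rw [div_mul_eq_mul_div, le_div_iff₀ hpos]
    linarith
  -- limit as s → 1⁻
  have hu : HasDerivAt (fun s : ℝ => (s ^ d)⁻¹) (-(d : ℝ)) 1 := by
    have h := (hasDerivAt_pow d (1:ℝ)).inv (by norm_num)
    exact h.congr_deriv (by simp)
  have hslope : Tendsto (slope (fun s : ℝ => (s ^ d)⁻¹) 1) (𝓝[<] 1) (𝓝 (-(d:ℝ))) :=
    (hasDerivAt_iff_tendsto_slope.mp hu).mono_left
      (nhdsWithin_mono _ (fun x hx => ne_of_lt hx))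
  have h2 : Tendsto (fun s : ℝ => -1 / (c * (1 + s)) * Z) (𝓝[<] 1)
      (𝓝 (-1 / (c * 2) * Z)) := by
    have hcont : ContinuousAt (fun s : ℝ => -1 / (c * (1 + s)) * Z) 1 := by
      have hne : c * (1 + (1:ℝ)) ≠ 0 := by positivity
      exact ((continuousAt_const.div
        (continuousAt_const.mul (continuousAt_const.add continuousAt_id)) (by simpa [hm.ne', hτ.ne'] using hne)).mul
        continuousAt_const)
    have h3 := hcont.tendsto.mono_left (nhdsWithin_le_nhds (s := Set.Iio (1:ℝ)))
    convert h3 using 2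
    norm_num
  have hlim : Tendsto (fun s : ℝ => ((s ^ d)⁻¹ - 1) / (c * (1 - s ^ 2)) * Z)
      (𝓝[<] (1:ℝ)) (𝓝 (d * τ / m * Z)) := by
    have hmul := hslope.mul h2
    have hval : -(d:ℝ) * (-1 / (c * 2) * Z) = d * τ / m * Z := by
      rw [hc_def]; field_simp
    rw [hval] at hmul
    refine hmul.congr' ?_
    filter_upwards [Ioo_mem_nhdsLT_of_mem (show (1:ℝ) ∈ Set.Ioc 0 1 by norm_num)] with s hs
    obtain ⟨hs0, hs1⟩ := hs
    have h1s : s - 1 ≠ 0 := by linarith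
    have h1s' : (1:ℝ) + s ≠ 0 := by linarith
    rw [slope_def_field]
    have hs2 : s ^ 2 < 1 := by nlinarith
    have hne1 : c * (1 - s ^ 2) ≠ 0 := ne_of_gt (mul_pos hc (by linarith))
    set A : ℝ := (s ^ d)⁻¹ - 1 with hA_def
    have goal_eq : (A / (s - 1)) * (-1 / (c * (1 + s)) * Z) = A / (c * (1 - s ^ 2)) * Z := by
      field_simp [(show (0:ℝ) < 1 - s ^ 2 by linarith).ne']
      ring
    simpa [hA_def] using goal_eq
  have hev : ∀ᶠ s in (𝓝[<] (1:ℝ)), M ≤ ((s ^ d)⁻¹ - 1) / (c * (1 - s ^ 2)) * Z := by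
    filter_upwards [Ioo_mem_nhdsLT_of_mem (show (1:ℝ) ∈ Set.Ioc 0 1 by norm_num)] with s hs
    exact bound_s s hs
  exact ge_of_tendsto hlim hev

end Main

/-- The Gibbs measure on `ℝ^d` with density proportional to `exp(−f(θ)/τ)`. -/
noncomputable def gibbs {d : ℕ} (f : EuclideanSpace ℝ (Fin d) → ℝ) (τ : ℝ) :
    Measure (EuclideanSpace ℝ (Fin d)) :=
  ((volume.withDensity fun θ => ENNReal.ofReal (Real.exp (-f θ / τ))) Set.univ)⁻¹ •
    (volume.withDensity fun θ => ENNReal.ofReal (Real.exp (-f θ / τ)))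

/-- The 2-Wasserstein distance (squared-cost infimum over couplings, then square root),
valued in `ℝ≥0∞`. -/
noncomputable def W2 {d : ℕ} (μ ν : Measure (EuclideanSpace ℝ (Fin d))) : ℝ≥0∞ :=
  ⨅ (γ : Measure (EuclideanSpace ℝ (Fin d) × EuclideanSpace ℝ (Fin d)))
    (_ : γ.map Prod.fst = μ) (_ : γ.map Prod.snd = ν),
      (∫⁻ q, (‖q.1 - q.2‖₊ : ℝ≥0∞) ^ 2 ∂γ) ^ (1/2 : ℝ)

set_option maxHeartbeats 1000000 in
/-- **Initial condition in `W₂`** (Lemma F.1 of the paper).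
For `m`-strongly convex `f` with global minimizer `θ*`, temperature `τ > 0`,
`π ∝ exp(−f/τ)`, and the Dirac measure `μ₀` at `θ₀`,
`W₂(μ₀, π) ≤ √2 (‖θ₀ − θ*‖ + √(dτ/m))`. -/
theorem W2_initial_bound
    (d : ℕ) (m τ : ℝ) (hm : 0 < m) (hτ : 0 < τ)
    (f : EuclideanSpace ℝ (Fin d) → ℝ)
    (gradf : EuclideanSpace ℝ (Fin d) → EuclideanSpace ℝ (Fin d))
    (hgrad : ∀ x, HasGradientAt f (gradf x) x)
    (hconv : ∀ x y, f x ≥ f y + ⟪gradf y, x - y⟫ + m / 2 * ‖x - y‖ ^ 2)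
    (θstar : EuclideanSpace ℝ (Fin d)) (hθstar : ∀ x, f θstar ≤ f x)
    (θ0 : EuclideanSpace ℝ (Fin d)) :
    W2 (Measure.dirac θ0) (gibbs f τ) ≤
      ENNReal.ofReal (Real.sqrt 2 * (‖θ0 - θstar‖ + Real.sqrt (d * τ / m))) := by
  classical
  have hdiff : Differentiable ℝ f := fun x => ((hgrad x).hasFDerivAt).differentiableAt
  have contf : Continuous f := hdiff.continuous
  set c : ℝ := m / (2 * τ) with hc_def
  have hc : 0 < c := by positivity
  set a : ℝ := ‖θ0 - θstar‖ with ha_def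
  have ha : 0 ≤ a := norm_nonneg _
  set b : ℝ := Real.sqrt (d * τ / m) with hb_def
  have hb : 0 ≤ b := Real.sqrt_nonneg _
  have hb2 : b ^ 2 = d * τ / m := Real.sq_sqrt (by positivity)
  -- quadratic lower bound on f
  have hg0 : gradf θstar = 0 := by
    have hloc : IsLocalMin f θstar := Filter.Eventually.of_forall hθstar
    have hF := hloc.hasFDerivAt_eq_zero (hgrad θstar).hasFDerivAt
    simpa using (LinearIsometryEquiv.map_eq_zero_iff
      (InnerProductSpace.toDual ℝ (EuclideanSpace ℝ (Fin d)))).mp hF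
  have hquad : ∀ θ, f θstar + m / 2 * ‖θ - θstar‖ ^ 2 ≤ f θ := by
    intro θ
    have h1 := hconv θ θstar
    rw [hg0] at h1
    simp only [inner_zero_left, add_zero] at h1
    linarith
  -- weight functions
  set w : EuclideanSpace ℝ (Fin d) → ℝ := fun θ => Real.exp (-f θ / τ) with hw_def
  have hw_pos : ∀ θ, 0 < w θ := fun θ => Real.exp_pos _
  set K : ℝ := Real.exp (-f θstar / τ) with hK_def
  have hK : 0 < K := Real.exp_pos _
  set v : EuclideanSpace ℝ (Fin d) → ℝ :=
    fun θ => Real.exp (-(f (θstar + θ) - f θstar) / τ) with hv_def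
  have hw_trans : ∀ θ, w (θstar + θ) = K * v θ := by
    intro θ
    rw [hw_def, hK_def, hv_def]
    show Real.exp (-f (θstar + θ) / τ) = Real.exp (-f θstar / τ) *
      Real.exp (-(f (θstar + θ) - f θstar) / τ)
    rw [← Real.exp_add]
    congr 1
    ring
  have cont_w : Continuous w := ((contf.neg.div_const τ)).rexp
  -- pointwise Gaussian domination
  have hw_le : ∀ θ, w θ ≤ K * Real.exp (-c * ‖θ - θstar‖ ^ 2) := by
    intro θ
    rw [hw_def, hK_def]
    show Real.exp (-f θ / τ) ≤ _
    rw [← Real.exp_add]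
    refine Real.exp_le_exp.mpr ?_
    rw [div_le_iff₀ hτ] at *
    have hq := hquad θ
    have : (-f θstar / τ + -c * ‖θ - θstar‖ ^ 2) * τ = -f θstar - m / 2 * ‖θ - θstar‖ ^ 2 := by
      rw [hc_def]; field_simp; ring
    rw [this]
    linarith
  -- integrability facts
  have gshift : Integrable (fun θ : EuclideanSpace ℝ (Fin d) =>
      Real.exp (-c * ‖θ - θstar‖ ^ 2)) := (gauss_int d hc).comp_sub_right θstar
  have pgshift : Integrable (fun θ : EuclideanSpace ℝ (Fin d) =>
      ‖θ - θstar‖ ^ 2 * Real.exp (-c * ‖θ - θstar‖ ^ 2)) :=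
    (poly_gauss_int d hc).comp_sub_right θstar
  have int_w : Integrable w := by
    refine (gshift.const_mul K).mono' cont_w.aestronglyMeasurable ?_
    filter_upwards with θ
    rw [Real.norm_eq_abs, abs_of_pos (hw_pos θ)]
    exact hw_le θ
  have int_nw : Integrable (fun θ => ‖θ - θstar‖ ^ 2 * w θ) := by
    refine (pgshift.const_mul K).mono'
      (((continuous_id.sub continuous_const).norm.pow 2).mul cont_w).aestronglyMeasurable ?_
    filter_upwards with θ
    rw [Real.norm_eq_abs, abs_of_nonneg (by positivity)]
    calc ‖θ - θstar‖ ^ 2 * w θ ≤ ‖θ - θstar‖ ^ 2 * (K * Real.exp (-c * ‖θ - θstar‖ ^ 2)) :=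
          mul_le_mul_of_nonneg_left (hw_le θ) (by positivity)
      _ = K * (‖θ - θstar‖ ^ 2 * Real.exp (-c * ‖θ - θstar‖ ^ 2)) := by ring
  have key_pt : ∀ θ : EuclideanSpace ℝ (Fin d), ‖θ0 - θ‖ ^ 2 ≤ 2 * a ^ 2 + 2 * ‖θ - θstar‖ ^ 2 := by
    intro θ
    have tri : ‖θ0 - θ‖ ≤ a + ‖θ - θstar‖ := by
      rw [ha_def]
      calc ‖θ0 - θ‖ = ‖(θ0 - θstar) + (θstar - θ)‖ := by
            rw [show θ0 - θ = (θ0 - θstar) + (θstar - θ) by abel]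
        _ ≤ ‖θ0 - θstar‖ + ‖θstar - θ‖ := norm_add_le _ _
        _ = ‖θ0 - θstar‖ + ‖θ - θstar‖ := by rw [norm_sub_rev θstar θ]
    nlinarith [norm_nonneg (θ0 - θ), norm_nonneg (θ - θstar),
      mul_le_mul tri tri (norm_nonneg _) (by positivity : (0:ℝ) ≤ a + ‖θ - θstar‖),
      sq_nonneg (a - ‖θ - θstar‖)]
  have int_cost : Integrable (fun θ => ‖θ0 - θ‖ ^ 2 * w θ) := by
    refine ((int_w.const_mul (2 * a ^ 2)).add (int_nw.const_mul 2)).mono'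
      (((continuous_const.sub continuous_id).norm.pow 2).mul cont_w).aestronglyMeasurable ?_
    filter_upwards with θ
    rw [Real.norm_eq_abs, abs_of_nonneg (by positivity)]
    simp only [Pi.add_apply]
    have := key_pt θ
    have hw' := (hw_pos θ).le
    nlinarith
  -- real-valued quantities
  set Zr : ℝ := ∫ θ, w θ with hZr_def
  set Cr : ℝ := ∫ θ, ‖θ0 - θ‖ ^ 2 * w θ with hCr_def
  set Mr : ℝ := ∫ θ, ‖θ - θstar‖ ^ 2 * w θ with hMr_def
  -- translation identities
  have hZ_trans : Zr = K * ∫ θ, v θ := by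
    rw [hZr_def, ← integral_add_left_eq_self w θstar]
    simp_rw [hw_trans]
    rw [integral_const_mul]
  have hM_trans : Mr = K * ∫ θ, ‖θ‖ ^ 2 * v θ := by
    rw [hMr_def, ← integral_add_left_eq_self (fun θ => ‖θ - θstar‖ ^ 2 * w θ) θstar]
    have : ∀ θ : EuclideanSpace ℝ (Fin d),
        ‖θstar + θ - θstar‖ ^ 2 * w (θstar + θ) = K * (‖θ‖ ^ 2 * v θ) := by
      intro θ
      rw [add_sub_cancel_left, hw_trans]
      ring
    simp_rw [this]
    rw [integral_const_mul]
  have key := key_moment (d := d) hm hτ hgrad hconv hθstar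
  have hMr_bound : Mr ≤ d * τ / m * Zr := by
    rw [hM_trans, hZ_trans]
    calc K * ∫ θ, ‖θ‖ ^ 2 * v θ ≤ K * (d * τ / m * ∫ θ, v θ) :=
          mul_le_mul_of_nonneg_left key hK.le
      _ = d * τ / m * (K * ∫ θ, v θ) := by ring
  have hZr_pos : 0 < Zr := by
    rw [hZr_def]
    rw [integral_pos_iff_support_of_nonneg_ae
      (Filter.Eventually.of_forall (fun θ => (hw_pos θ).le)) int_w]
    have hsupp : Function.support w = Set.univ :=
      Set.eq_univ_of_forall (fun θ => (hw_pos θ).ne')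
    rw [hsupp]
    exact isOpen_univ.measure_pos volume ⟨0, trivial⟩
  have hCr_bound : Cr ≤ 2 * (a + b) ^ 2 * Zr := by
    have h1 : Cr ≤ 2 * a ^ 2 * Zr + 2 * Mr := by
      rw [hCr_def, hZr_def, hMr_def]
      rw [← integral_const_mul, ← integral_const_mul, ← integral_add
        (int_w.const_mul _) (int_nw.const_mul _)]
      refine integral_mono int_cost
        ((int_w.const_mul _).add (int_nw.const_mul _)) (fun θ => ?_)
      have := key_pt θ
      have hw' := (hw_pos θ).le
      nlinarith
    have h2 : 2 * Mr ≤ 2 * (d * τ / m) * Zr := by linarith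
    have h3 : d * τ / m = b ^ 2 := hb2.symm
    nlinarith [mul_nonneg ha hb, hZr_pos.le]
  -- now the measure-theoretic part
  set ρ : EuclideanSpace ℝ (Fin d) → ℝ≥0∞ :=
    fun θ => ENNReal.ofReal (Real.exp (-f θ / τ)) with hρ_def
  have meas_ρ : Measurable ρ := ENNReal.measurable_ofReal.comp cont_w.measurable
  have hNZ : (volume.withDensity ρ) Set.univ = ENNReal.ofReal Zr := by
    rw [withDensity_apply _ MeasurableSet.univ, setLIntegral_univ, hZr_def,
      ofReal_integral_eq_lintegral_ofReal int_w
        (Filter.Eventually.of_forall (fun θ => (hw_pos θ).le))]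
  have hNZ0 : (volume.withDensity ρ) Set.univ ≠ 0 := by
    rw [hNZ]; exact (ENNReal.ofReal_pos.mpr hZr_pos).ne'
  have hNZtop : (volume.withDensity ρ) Set.univ ≠ ⊤ := by
    rw [hNZ]; exact ENNReal.ofReal_ne_top
  have prob : IsProbabilityMeasure (gibbs f τ) := by
    constructor
    rw [gibbs, Measure.smul_apply, smul_eq_mul]
    exact ENNReal.inv_mul_cancel hNZ0 hNZtop
  set γ : Measure (EuclideanSpace ℝ (Fin d) × EuclideanSpace ℝ (Fin d)) :=
    (Measure.dirac θ0).prod (gibbs f τ) with hγ_def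
  have hfst : γ.map Prod.fst = Measure.dirac θ0 := by
    rw [hγ_def, Measure.map_fst_prod, measure_univ, one_smul]
  have hsnd : γ.map Prod.snd = gibbs f τ := by
    rw [hγ_def, Measure.map_snd_prod, measure_univ, one_smul]
  have meascost : Measurable (fun q : EuclideanSpace ℝ (Fin d) × EuclideanSpace ℝ (Fin d) =>
      ((‖q.1 - q.2‖₊ : ℝ≥0∞)) ^ 2) :=
    ((measurable_coe_nnreal_ennreal.comp
      ((continuous_fst.sub continuous_snd).nnnorm.measurable)).pow_const 2)
  have hW : W2 (Measure.dirac θ0) (gibbs f τ) ≤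
      (∫⁻ q, ((‖q.1 - q.2‖₊ : ℝ≥0∞)) ^ 2 ∂γ) ^ (1/2 : ℝ) := by
    rw [W2]
    exact le_trans (iInf_le _ γ) (le_trans (iInf_le _ hfst) (iInf_le _ hsnd))
  have hcost : (∫⁻ q, ((‖q.1 - q.2‖₊ : ℝ≥0∞)) ^ 2 ∂γ)
      = ∫⁻ θ, ((‖θ0 - θ‖₊ : ℝ≥0∞)) ^ 2 ∂(gibbs f τ) := by
    rw [hγ_def, lintegral_prod _ meascost.aemeasurable]
    rw [lintegral_dirac' _ (meascost.lintegral_prod_right')]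
  have hgibbs_lint : (∫⁻ θ, ((‖θ0 - θ‖₊ : ℝ≥0∞)) ^ 2 ∂(gibbs f τ))
      = ((volume.withDensity ρ) Set.univ)⁻¹ * ENNReal.ofReal Cr := by
    rw [gibbs, lintegral_smul_measure]
    congr 1
    have measg : Measurable (fun θ : EuclideanSpace ℝ (Fin d) => ((‖θ0 - θ‖₊ : ℝ≥0∞)) ^ 2) :=
      (measurable_coe_nnreal_ennreal.comp
        ((continuous_const.sub continuous_id).nnnorm.measurable)).pow_const 2
    rw [lintegral_withDensity_eq_lintegral_mul volume meas_ρ measg]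
    rw [hCr_def, ofReal_integral_eq_lintegral_ofReal int_cost
      (Filter.Eventually.of_forall (fun θ => by positivity))]
    refine lintegral_congr (fun θ => ?_)
    simp only [Pi.mul_apply]
    rw [ENNReal.ofReal_mul (by positivity), ENNReal.ofReal_pow (norm_nonneg _),
      ofReal_norm, enorm_eq_nnnorm, mul_comm]
  have hfinal : ((volume.withDensity ρ) Set.univ)⁻¹ * ENNReal.ofReal Cr
      ≤ ENNReal.ofReal (2 * (a + b) ^ 2) := by
    rw [hNZ, ← ENNReal.div_eq_inv_mul]
    rw [ENNReal.div_le_iff_le_mul (Or.inl (ENNReal.ofReal_pos.mpr hZr_pos).ne')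
      (Or.inl ENNReal.ofReal_ne_top)]
    rw [← ENNReal.ofReal_mul (by positivity)]
    exact ENNReal.ofReal_le_ofReal hCr_bound
  calc W2 (Measure.dirac θ0) (gibbs f τ)
      ≤ (∫⁻ q, ((‖q.1 - q.2‖₊ : ℝ≥0∞)) ^ 2 ∂γ) ^ (1/2 : ℝ) := hW
    _ ≤ (ENNReal.ofReal (2 * (a + b) ^ 2)) ^ (1/2 : ℝ) := by
        rw [hcost, hgibbs_lint]
        exact ENNReal.rpow_le_rpow hfinal (by norm_num)
    _ = ENNReal.ofReal (Real.sqrt 2 * (a + b)) := by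
        rw [ENNReal.ofReal_rpow_of_nonneg (by positivity) (by norm_num)]
        congr 1
        rw [← Real.sqrt_eq_rpow, Real.sqrt_mul (by norm_num), Real.sqrt_sq (by positivity)]
end
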